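/- arXiv:1402.4885 — 4 statements merged into one kernel-verified Lean document; each statement's English description precedes it below -/
import Mathlib

section
/- Let Λ and Λ' be ℤ-lattices in ℂ and let f : ℂ → ℂ be an entire (everywhere complex-differentiable) function such that f(z + λ) − f(z) ∈ Λ' for every z ∈ ℂ and every λ ∈ Λ (so that f descends to a holomorphic map of complex tori ℂ ⧸ Λ → ℂ ⧸ Λ'). Then f is complex affine: there exist γ, δ ∈ ℂ such that f(z) = γ·z + δ for all z ∈ ℂ. -/
/-!
For `l ∈ Λ`, the continuous function `z ↦ f (z + l) - f z` takes values in the discrete set `Λ'`,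
so it is constant on the connected plane. Differentiating, `f'` is `Λ`-periodic, hence bounded by
its maximum over the compact closure of a fundamental domain of `Λ`. By Liouville `f'` is constant,
so `f` is affine.
-/

open Bornology Set

theorem apply_add_sub_apply_eq_of_isDiscrete {G H : Type*} [TopologicalSpace G] [Add G]
    [ContinuousAdd G] [PreconnectedSpace G] [TopologicalSpace H] [Sub H] [ContinuousSub H]
    {S : Set H} (hS : IsDiscrete S) {f : G → H} (hf : Continuous f) {l : G}
    (hmem : ∀ z, f (z + l) - f z ∈ S) (z w : G) :
    f (z + l) - f z = f (w + l) - f w :=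
  isPreconnected_univ.constant_of_mapsTo hS (by fun_prop) (fun z _ ↦ hmem z) trivial trivial

theorem periodic_deriv_of_apply_add_eq_add_const {𝕜 F : Type*} [NontriviallyNormedField 𝕜]
    [NormedAddCommGroup F] [NormedSpace 𝕜 F] {f : 𝕜 → F} {l : 𝕜} {c : F}
    (h : ∀ z, f (z + l) = f z + c) : Function.Periodic (deriv f) l := fun z ↦ by
  rw [← deriv_comp_add_const, funext h, deriv_add_const]

theorem eq_smul_add_of_deriv_eq_const {𝕜 F : Type*} [RCLike 𝕜] [NormedAddCommGroup F]
    [NormedSpace 𝕜 F] {f : 𝕜 → F} {c : F} (hf : Differentiable 𝕜 f) (hc : ∀ z, deriv f z = c)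
    (z : 𝕜) : f z = z • c + f 0 := by
  have hderiv : ∀ w, deriv (fun w ↦ f w - w • c) w = 0 := fun w ↦ by
    rw [deriv_fun_sub (hf w) (by fun_prop), hc, deriv_smul_const differentiableAt_id, deriv_id'',
      one_smul, sub_self]
  simpa [sub_eq_iff_eq_add, add_comm] using
    is_const_of_deriv_eq_zero (hf.sub (by fun_prop)) hderiv z 0

theorem ZLattice.isBounded_range_of_periodic {E F : Type*} [NormedAddCommGroup E]
    [NormedSpace ℝ E] [FiniteDimensional ℝ E] [PseudoMetricSpace F]
    (L : Submodule ℤ E) [DiscreteTopology L] [IsZLattice ℝ L] {g : E → F} (hg : Continuous g)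
    (hper : ∀ l ∈ L, Function.Periodic g l) : IsBounded (range g) := by
  let b := (Module.Free.chooseBasis ℤ L).ofZLatticeBasis ℝ L
  have hfract : ∀ z, g (ZSpan.fract b z) = g z := fun z ↦
    (hper _ ((Module.Basis.ofZLatticeBasis_span ℝ L _).le (ZSpan.floor b z).2)).sub_eq z
  have hcompact : IsCompact (closure (ZSpan.fundamentalDomain b)) :=
    (ZSpan.fundamentalDomain_isBounded b).isCompact_closure
  refine (hcompact.image hg).isBounded.subset ?_
  rintro - ⟨z, rfl⟩
  exact ⟨_, subset_closure (ZSpan.fract_mem_fundamentalDomain b z), hfract z⟩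

theorem entire_descends_to_torus_is_affine_general
    (Λ Λ' : Submodule ℤ ℂ)
    [DiscreteTopology Λ] [IsZLattice ℝ Λ]
    [DiscreteTopology Λ']
    (f : ℂ → ℂ) (hf : Differentiable ℂ f)
    (hper : ∀ z : ℂ, ∀ l ∈ Λ, f (z + l) - f z ∈ Λ') :
    ∃ γ δ : ℂ, ∀ z : ℂ, f z = γ * z + δ := by
  have hshift : ∀ l ∈ Λ, ∀ z, f (z + l) = f z + (f l - f 0) := fun l hl z ↦ by
    have := apply_add_sub_apply_eq_of_isDiscrete
      (isDiscrete_iff_discreteTopology.mpr ‹DiscreteTopology Λ'›) hf.continuous (hper · l hl) z 0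
    rw [zero_add] at this
    rw [← this, add_sub_cancel]
  have hbdd : IsBounded (range (deriv f)) := ZLattice.isBounded_range_of_periodic Λ
    hf.deriv.continuous fun l hl ↦ periodic_deriv_of_apply_add_eq_add_const (hshift l hl)
  obtain ⟨γ, hγ⟩ := hf.deriv.exists_const_forall_eq_of_bounded hbdd
  exact ⟨γ, f 0, fun z ↦ by rw [eq_smul_add_of_deriv_eq_const hf hγ z, smul_eq_mul, mul_comm]⟩

/-- A holomorphic map between complex tori lifts to a complex affine map:
if `f : ℂ → ℂ` is entire and `f (z + λ) - f z ∈ Λ'` for all `z ∈ ℂ` and `λ ∈ Λ`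
(so that `f` descends to a holomorphic map `ℂ ⧸ Λ → ℂ ⧸ Λ'`), then
`f z = γ * z + δ` for some constants `γ, δ ∈ ℂ`. -/
theorem entire_descends_to_torus_is_affine
    (Λ Λ' : Submodule ℤ ℂ)
    [DiscreteTopology Λ] [IsZLattice ℝ Λ]
    [DiscreteTopology Λ'] [IsZLattice ℝ Λ']
    (f : ℂ → ℂ) (hf : Differentiable ℂ f)
    (hper : ∀ z : ℂ, ∀ l ∈ Λ, f (z + l) - f z ∈ Λ') :
    ∃ γ δ : ℂ, ∀ z : ℂ, f z = γ * z + δ :=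
  entire_descends_to_torus_is_affine_general Λ Λ' f hf hper
end

section
/- Let Λ be a ℤ-lattice in ℂ and γ, δ ∈ ℂ such that γ·λ ∈ Λ for every λ ∈ Λ and γ²·z + (γ + 1)·δ − z ∈ Λ for all z ∈ ℂ (so z ↦ γ·z + δ descends to a holomorphic involution of the complex torus ℂ ⧸ Λ). Let F := {w ∈ ℂ ⧸ Λ : for every z ∈ ℂ with mk z = w, γ·z + δ − z ∈ Λ} be the fixed-point set of the induced involution. Then exactly one of the following holds: F is all of ℂ ⧸ Λ, or F is empty, or F has exactly 4 elements. -/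
open Module

lemma aux_not_forall_mem (Λ : Submodule ℤ ℂ) [DiscreteTopology Λ] [IsZLattice ℝ Λ] :
    ¬ ∀ w : ℂ, w ∈ Λ := by
  intro h
  have hsurj : Function.Surjective (fun x : Λ => (x : ℂ)) := fun w => ⟨⟨w, h w⟩, rfl⟩
  have hc : Countable ℂ := hsurj.countable
  have hu : Uncountable ℂ := Complex.ofReal_injective.uncountable
  exact not_countable hc

lemma aux_infinite_quot (Λ : Submodule ℤ ℂ) [DiscreteTopology Λ] [IsZLattice ℝ Λ] :
    Infinite (ℂ ⧸ Λ) := by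
  by_contra h
  rw [not_infinite_iff_finite] at h
  have hout : ∀ w : ℂ ⧸ Λ, (Submodule.Quotient.mk w.out : ℂ ⧸ Λ) = w := fun w => Quotient.out_eq' w
  let f : ℂ → (ℂ ⧸ Λ) × Λ := fun z =>
    (Submodule.Quotient.mk z,
      ⟨z - (Submodule.Quotient.mk z : ℂ ⧸ Λ).out,
        (Submodule.Quotient.eq Λ).mp (hout (Submodule.Quotient.mk z)).symm⟩)
  have hfinj : Function.Injective f := by
    intro x y hxy
    have h1 : (Submodule.Quotient.mk x : ℂ ⧸ Λ) = Submodule.Quotient.mk y :=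
      congrArg Prod.fst hxy
    have h2 : x - (Submodule.Quotient.mk x : ℂ ⧸ Λ).out
        = y - (Submodule.Quotient.mk y : ℂ ⧸ Λ).out :=
      congrArg (fun p => ((p.2 : Λ) : ℂ)) hxy
    rw [h1] at h2
    exact sub_left_inj.mp h2
  have hc : Countable ℂ := hfinj.countable
  have hu : Uncountable ℂ := Complex.ofReal_injective.uncountable
  exact not_countable hc

/-- Fixed-point trichotomy for holomorphic involutions of a complex torus.
If `z ↦ γ * z + δ` preserves the `ℤ`-lattice `Λ` and is an involution modulo `Λ`,
then the fixed-point set `F` of the induced involution of `ℂ ⧸ Λ` is either all of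
`ℂ ⧸ Λ`, or empty, or consists of exactly `4` points -- and exactly one of these
three alternatives holds. -/
theorem fixedPoints_of_holomorphic_involution_trichotomy
    (Λ : Submodule ℤ ℂ) [DiscreteTopology Λ] [IsZLattice ℝ Λ]
    (γ δ : ℂ)
    (hlat : ∀ l ∈ Λ, γ * l ∈ Λ)
    (hinv : ∀ z : ℂ, γ ^ 2 * z + (γ + 1) * δ - z ∈ Λ)
    (F : Set (ℂ ⧸ Λ))
    (hF : F = {w : ℂ ⧸ Λ |
      ∀ z : ℂ, Submodule.Quotient.mk z = w → γ * z + δ - z ∈ Λ}) :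
    (F = Set.univ ∧ ¬F = ∅ ∧ ¬Nat.card F = 4) ∨
    (¬F = Set.univ ∧ F = ∅ ∧ ¬Nat.card F = 4) ∨
    (¬F = Set.univ ∧ ¬F = ∅ ∧ Nat.card F = 4) := by
  have hinf : Infinite (ℂ ⧸ Λ) := aux_infinite_quot Λ
  have hcard0 : Nat.card (ℂ ⧸ Λ) = 0 := Nat.card_eq_zero_of_infinite
  have hsq : ∀ z : ℂ, (γ ^ 2 - 1) * z ∈ Λ := by
    intro z
    have h := Λ.sub_mem (hinv (2 * z)) (hinv z)
    have e : (γ ^ 2 * (2 * z) + (γ + 1) * δ - 2 * z) - (γ ^ 2 * z + (γ + 1) * δ - z)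
        = (γ ^ 2 - 1) * z := by ring
    rwa [e] at h
  have hγ2 : γ ^ 2 = 1 := by
    by_contra h
    refine aux_not_forall_mem Λ (fun w => ?_)
    have h2 := hsq (w / (γ ^ 2 - 1))
    rwa [mul_div_cancel₀ _ (sub_ne_zero.mpr h)] at h2
  have hγ : γ = 1 ∨ γ = -1 := by
    have h : (γ - 1) * (γ + 1) = 0 := by linear_combination hγ2
    rcases mul_eq_zero.mp h with h | h
    · exact Or.inl (sub_eq_zero.mp h)
    · exact Or.inr (eq_neg_of_add_eq_zero_left h)
  rcases hγ with hγ | hγ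
  · -- γ = 1 : translation case
    subst hγ
    by_cases hδ : δ ∈ Λ
    · left
      have hFu : F = Set.univ := by
        rw [hF]
        ext w
        simp only [Set.mem_setOf_eq, Set.mem_univ, iff_true]
        intro z _
        rw [show (1:ℂ) * z + δ - z = δ from by ring]
        exact hδ
      refine ⟨hFu, ?_, ?_⟩
      · rw [hFu]; exact (Set.univ_nonempty).ne_empty
      · rw [hFu, Nat.card_coe_set_eq, Set.ncard_univ, hcard0]; omega
    · right; left
      have hFe : F = ∅ := by
        rw [hF]
        ext w
        simp only [Set.mem_setOf_eq, Set.mem_empty_iff_false, iff_false]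
        intro hw
        obtain ⟨z, hz⟩ := Submodule.Quotient.mk_surjective Λ w
        have h2 := hw z hz
        rw [show (1:ℂ) * z + δ - z = δ from by ring] at h2
        exact hδ h2
      refine ⟨?_, hFe, ?_⟩
      · rw [hFe]; exact fun h => (Set.univ_nonempty (α := ℂ ⧸ Λ)).ne_empty h.symm
      · rw [hFe]; simp
  · -- γ = -1 : the 4-point case
    subst hγ
    right; right
    have hkey : ∀ z : ℂ, (Submodule.Quotient.mk z : ℂ ⧸ Λ) ∈ F ↔ 2 * z - δ ∈ Λ := by
      intro z
      rw [hF]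
      constructor
      · intro h
        have h1 := h z rfl
        have h2 : -((-1 : ℂ) * z + δ - z) ∈ Λ := Λ.neg_mem h1
        rwa [show -((-1:ℂ) * z + δ - z) = 2 * z - δ from by ring] at h2
      · intro h z' hz'
        have hd : z' - z ∈ Λ := (Submodule.Quotient.eq Λ).mp hz'
        have h3 : -((2 * z - δ) + ((z' - z) + (z' - z))) ∈ Λ :=
          Λ.neg_mem (Λ.add_mem h (Λ.add_mem hd hd))
        rwa [show -((2 * z - δ) + ((z' - z) + (z' - z))) = (-1 : ℂ) * z' + δ - z' from by ring]
          at h3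
    have hrank : finrank ℤ Λ = 2 := by rw [ZLattice.rank ℝ Λ, Complex.finrank_real_complex]
    let b : Basis (Fin 2) ℤ Λ := (Module.finBasis ℤ Λ).reindex (finCongr hrank)
    have hcoe2 : ∀ x y : ℤ, ((x • b 0 + y • b 1 : Λ) : ℂ)
        = (x : ℂ) * (b 0 : ℂ) + (y : ℂ) * (b 1 : ℂ) := by
      intro x y
      push_cast [zsmul_eq_mul]
      rfl
    have heven : ∀ (m n : ℤ) (l : Λ),
        (l : ℂ) * 2 = (m : ℂ) * (b 0 : ℂ) + (n : ℂ) * (b 1 : ℂ) → m % 2 = 0 ∧ n % 2 = 0 := by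
      intro m n l hl
      have hl2 : (2 : ℤ) • l = m • b 0 + n • b 1 := by
        apply Subtype.coe_injective
        show ((2 • l : Λ) : ℂ) = ((m • b 0 + n • b 1 : Λ) : ℂ)
        rw [hcoe2]
        push_cast [zsmul_eq_mul]
        rw [mul_comm]
        exact hl
      have h0 := congrArg (fun x => b.repr x 0) hl2
      have h1 := congrArg (fun x => b.repr x 1) hl2
      simp [Finsupp.single_apply] at h0 h1
      constructor
      · omega
      · omega
    set q : ℤ → ℤ → ℂ ⧸ Λ := fun a c =>
      Submodule.Quotient.mk (δ / 2 + ((a : ℂ) * (b 0 : ℂ) + (c : ℂ) * (b 1 : ℂ)) / 2)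
      with hqdef
    have hq : ∀ a c : ℤ, q a c ∈ F := by
      intro a c
      rw [hqdef]
      rw [hkey]
      rw [show 2 * (δ / 2 + ((a : ℂ) * (b 0 : ℂ) + (c : ℂ) * (b 1 : ℂ)) / 2) - δ
          = (a : ℂ) * (b 0 : ℂ) + (c : ℂ) * (b 1 : ℂ) from by ring]
      rw [← hcoe2]
      exact (a • b 0 + c • b 1 : Λ).2
    have hinj : ∀ a c a' c' : ℤ, q a c = q a' c' → (a - a') % 2 = 0 ∧ (c - c') % 2 = 0 := by
      intro a c a' c' h
      rw [hqdef] at h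
      have hd := (Submodule.Quotient.eq Λ).mp h
      refine heven (a - a') (c - c') ⟨_, hd⟩ ?_
      push_cast
      ring
    have hcov : ∀ w ∈ F, ∃ a c : ℤ, (a = 0 ∨ a = 1) ∧ (c = 0 ∨ c = 1) ∧ w = q a c := by
      intro w hw
      obtain ⟨z, rfl⟩ := Submodule.Quotient.mk_surjective Λ w
      have h2 : 2 * z - δ ∈ Λ := (hkey z).mp hw
      set l : Λ := ⟨2 * z - δ, h2⟩ with hldef
      have hrep : l = b.repr l 0 • b 0 + b.repr l 1 • b 1 := by
        conv_lhs => rw [← b.sum_repr l]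
        rw [Fin.sum_univ_two]
      set m := b.repr l 0 with hm
      set n := b.repr l 1 with hn
      refine ⟨m % 2, n % 2, Int.emod_two_eq_zero_or_one m, Int.emod_two_eq_zero_or_one n, ?_⟩
      have hz : 2 * z - δ = (m : ℂ) * (b 0 : ℂ) + (n : ℂ) * (b 1 : ℂ) := by
        have h3 := congrArg (fun x : Λ => (x : ℂ)) hrep
        simpa [hcoe2] using h3
      rw [hqdef]
      rw [Submodule.Quotient.eq]
      have hmc : ((m % 2 : ℤ) : ℂ) + 2 * ((m / 2 : ℤ) : ℂ) = (m : ℂ) := by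
        exact_mod_cast congrArg (fun k : ℤ => (k : ℂ)) (Int.emod_add_mul_ediv m 2)
      have hnc : ((n % 2 : ℤ) : ℂ) + 2 * ((n / 2 : ℤ) : ℂ) = (n : ℂ) := by
        exact_mod_cast congrArg (fun k : ℤ => (k : ℂ)) (Int.emod_add_mul_ediv n 2)
      have hgoal : z - (δ / 2 + (((m % 2 : ℤ) : ℂ) * (b 0 : ℂ) + ((n % 2 : ℤ) : ℂ) * (b 1 : ℂ)) / 2)
          = ((m / 2 : ℤ) : ℂ) * (b 0 : ℂ) + ((n / 2 : ℤ) : ℂ) * (b 1 : ℂ) := by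
        linear_combination hz / 2 - ((b 0 : ℂ) / 2) * hmc - ((b 1 : ℂ) / 2) * hnc
      rw [hgoal, ← hcoe2]
      exact ((m / 2) • b 0 + (n / 2) • b 1 : Λ).2
    have hd1 : q 0 0 ≠ q 0 1 := fun h => by have := hinj 0 0 0 1 h; omega
    have hd2 : q 0 0 ≠ q 1 0 := fun h => by have := hinj 0 0 1 0 h; omega
    have hd3 : q 0 0 ≠ q 1 1 := fun h => by have := hinj 0 0 1 1 h; omega
    have hd4 : q 0 1 ≠ q 1 0 := fun h => by have := hinj 0 1 1 0 h; omega
    have hd5 : q 0 1 ≠ q 1 1 := fun h => by have := hinj 0 1 1 1 h; omega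
    have hd6 : q 1 0 ≠ q 1 1 := fun h => by have := hinj 1 0 1 1 h; omega
    have hFset : F = {q 0 0, q 0 1, q 1 0, q 1 1} := by
      ext w
      constructor
      · intro hw
        obtain ⟨a, c, ha, hc, rfl⟩ := hcov w hw
        rcases ha with rfl | rfl <;> rcases hc with rfl | rfl <;> simp
      · intro hw
        rcases hw with rfl | rfl | rfl | rfl
        · exact hq 0 0
        · exact hq 0 1
        · exact hq 1 0
        · exact hq 1 1
    have hcard : Nat.card F = 4 := by
      rw [Nat.card_coe_set_eq, hFset,
        Set.ncard_insert_of_notMem (by simp [hd1, hd2, hd3]),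
        Set.ncard_insert_of_notMem (by simp [hd4, hd5]),
        Set.ncard_pair hd6]
    refine ⟨?_, ?_, hcard⟩
    · intro hU
      rw [hU, Nat.card_coe_set_eq, Set.ncard_univ, hcard0] at hcard
      omega
    · intro hE
      have := hq 0 0
      rw [hE] at this
      exact this
end

section
/- Let t > 0 be a real number and let Λ be the additive subgroup {m + n·t·i : m, n ∈ ℤ} of ℂ. Then for every z ∈ ℂ, one has conj(z) − z ∈ Λ if and only if there exists n ∈ ℤ with Im z = n·t/2. Consequently the fixed-point set of the antiholomorphic involution of ℂ ⧸ Λ induced by z ↦ conj(z) is the image of the two horizontal lines Im z = 0 and Im z = t/2, i.e. two disjoint circles (the involution has species 2). -/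
open ComplexConjugate

/-- Species 2: for the rectangular lattice `Λ = {m + n·t·i : m, n ∈ ℤ}` with `t > 0`,
one has `conj z - z ∈ Λ` iff `Im z = n·t/2` for some integer `n`.  Hence the
fixed-point set of the antiholomorphic involution of `ℂ ⧸ Λ` induced by
`z ↦ conj z` is the image of the two horizontal lines `Im z = 0` and `Im z = t/2`,
i.e. two disjoint circles. -/
theorem species_two_fixed_lines (t : ℝ) (ht : 0 < t)
    (Λ : AddSubgroup ℂ)
    (hΛ : ∀ z : ℂ, z ∈ Λ ↔ ∃ m n : ℤ, z = (m : ℂ) + (n : ℂ) * ((t : ℂ) * Complex.I))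
    (z : ℂ) :
    conj z - z ∈ Λ ↔ ∃ n : ℤ, z.im = n * t / 2 := by
  rw [hΛ]
  constructor
  · rintro ⟨m, n, h⟩
    rw [Complex.ext_iff] at h
    obtain ⟨h1, h2⟩ := h
    simp [Complex.sub_im, Complex.conj_im] at h2
    refine ⟨-n, ?_⟩
    push_cast
    linarith
  · rintro ⟨n, h⟩
    refine ⟨0, -n, ?_⟩
    rw [Complex.ext_iff]
    constructor
    · simp
    · simp [Complex.sub_im, Complex.conj_im, h]
      ring
end

section
/- Let t > 0 be a real number, set τ = 1/2 + t·i, and let Λ be the additive subgroup {m + n·τ : m, n ∈ ℤ} of ℂ. Then for every z ∈ ℂ, conj(z) − z ∈ Λ if and only if there exists c ∈ ℤ with Im z = c·t. Consequently the fixed-point set of the antiholomorphic involution of ℂ ⧸ Λ induced by z ↦ conj(z) is the image of the horizontal lines Im z ∈ t·ℤ, a single circle (the involution has species 1). -/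
open ComplexConjugate

/-- Species 1: for `τ = 1/2 + t·i` with `t > 0` and the lattice
`Λ = {m + n·τ : m, n ∈ ℤ}`, one has `conj z - z ∈ Λ` iff `Im z = c·t` for some
integer `c`.  Hence the fixed-point set of the antiholomorphic involution of
`ℂ ⧸ Λ` induced by `z ↦ conj z` is the image of the horizontal lines
`Im z ∈ t·ℤ`, a single circle. -/
theorem species_one_fixed_lines (t : ℝ) (ht : 0 < t)
    (Λ : AddSubgroup ℂ)
    (hΛ : ∀ z : ℂ, z ∈ Λ ↔
      ∃ m n : ℤ, z = (m : ℂ) + (n : ℂ) * (1 / 2 + (t : ℂ) * Complex.I))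
    (z : ℂ) :
    conj z - z ∈ Λ ↔ ∃ c : ℤ, z.im = c * t := by
  rw [hΛ]
  constructor
  · rintro ⟨m, n, h⟩
    rw [Complex.ext_iff] at h
    simp [Complex.add_im, Complex.add_re, Complex.mul_re, Complex.mul_im] at h
    obtain ⟨h1, h2⟩ := h
    -- h1 : 0 = m + n/2 (real parts), h2 : -2 z.im = n t (imag parts)
    refine ⟨m, ?_⟩
    have hn : (n : ℝ) = -2 * m := by linarith
    rw [hn] at h2
    linarith
  · rintro ⟨c, hc⟩
    refine ⟨c, -2 * c, ?_⟩
    rw [Complex.ext_iff]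
    constructor <;>
      simp [Complex.add_im, Complex.add_re, Complex.mul_re, Complex.mul_im, hc] <;> ring
end
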